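/- Let 0 < ε ≤ 0.1, n ≥ 2, T ≥ 1. For any two distinct indices v, v* ∈ {1,…,n}, the expectation under P_{v*}^T of the likelihood ratio P_v^T / P_0^T equals 1; that is, Σ_{g ∈ Ω^T} P_{v*}^T(g) · P_v^T(g) / P_0^T(g) = 1. -/

import Mathlib

/-!
The likelihood ratio of product measures is the product of the one-round ratios, so the
expectation is the `T`-th power of its one-round value. In one round `P_v / P_0 = 1 ± 2ε`
according as `c = a_v` or not; against `P_{v*}` the terms linear in `ε` cancel in the sum over
`c`, and the quadratic term `±4ε²` has sign given by whether `a_v = a_{v*}`, which averages to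
zero over the uniform advice because flipping `a_v` leaves `a_{v*}` unchanged.
-/

open scoped BigOperators

/-- The sample space of a single round: an advice vector `a ∈ {0,1}ⁿ`
and a correct-arm indicator `c ∈ {0,1}`. -/
abbrev Omg (n : ℕ) := (Fin n → Bool) × Bool

/-- Under `P0`, the advice vector is uniform on `{0,1}ⁿ` and the correct-arm
indicator is uniform on `{0,1}`, independently. -/
noncomputable def P0 (n : ℕ) : Omg n → ℝ := fun _ => (1 / 2 : ℝ) ^ (n + 1)

/-- Under `Pv n ε v`, the advice vector is uniform on `{0,1}ⁿ` and, conditionally on it,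
the correct-arm indicator equals its `v`-th entry with probability `1/2 + ε`. -/
noncomputable def Pv (n : ℕ) (ε : ℝ) (v : Fin n) : Omg n → ℝ := fun w =>
  (1 / 2 : ℝ) ^ n * (if w.2 = w.1 v then 1 / 2 + ε else 1 / 2 - ε)

/-- `T`-fold product of a probability mass function on `Omg n`. -/
noncomputable def prodP {n : ℕ} (T : ℕ) (P : Omg n → ℝ) : (Fin T → Omg n) → ℝ :=
  fun g => ∏ t, P (g t)

lemma prodP_mul_div {n T : ℕ} (P Q R : Omg n → ℝ) (g : Fin T → Omg n) :
    prodP T P g * (prodP T Q g / prodP T R g) = prodP T (fun w => P w * (Q w / R w)) g := by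
  simp only [prodP, Finset.prod_mul_distrib, Finset.prod_div_distrib]

lemma sum_prodP {n : ℕ} (T : ℕ) (P : Omg n → ℝ) :
    ∑ g : Fin T → Omg n, prodP T P g = (∑ w, P w) ^ T :=
  (Fintype.sum_pow P T).symm

lemma sum_ite_eq_neg_eq_zero {ι R : Type*} [Fintype ι] [DecidableEq ι] [AddCommGroup R]
    {i j : ι} (hij : i ≠ j) (x : R) :
    ∑ a : ι → Bool, (if a i = a j then x else -x) = 0 := by
  refine Finset.sum_ninvolution (fun a => Function.update a i !(a i)) (fun a => ?_)
    (fun a _ h => by simpa using congrFun h i) (fun _ => Finset.mem_univ _) (fun a => by simp)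
  rw [Function.update_self, Function.update_of_ne hij.symm]
  cases a i <;> cases a j <;> simp

lemma sum_bool_Pv_mul_div_P0 (n : ℕ) (ε : ℝ) (v vstar : Fin n) (a : Fin n → Bool) :
    ∑ c : Bool, Pv n ε vstar (a, c) * (Pv n ε v (a, c) / P0 n (a, c)) =
      (1 / 2 : ℝ) ^ n * (1 + if a v = a vstar then 4 * ε ^ 2 else -(4 * ε ^ 2)) := by
  simp only [Fintype.sum_bool, Pv, P0, pow_succ (1 / 2 : ℝ) n]
  rcases Bool.eq_false_or_eq_true (a v) with hv | hv <;>
    rcases Bool.eq_false_or_eq_true (a vstar) with hs | hs <;>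
    simp only [hv, hs, Bool.true_eq_false, Bool.false_eq_true, ↓reduceIte] <;> field_simp <;> ring

lemma sum_Pv_mul_div_P0 {n : ℕ} (ε : ℝ) {v vstar : Fin n} (hne : v ≠ vstar) :
    ∑ w : Omg n, Pv n ε vstar w * (Pv n ε v w / P0 n w) = 1 := by
  simp only [Fintype.sum_prod_type, sum_bool_Pv_mul_div_P0, ← Finset.mul_sum,
    Finset.sum_add_distrib, sum_ite_eq_neg_eq_zero hne, Finset.sum_const, Finset.card_univ,
    Fintype.card_fun, Fintype.card_bool, Fintype.card_fin, nsmul_eq_mul]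
  push_cast
  rw [add_zero, mul_one, ← mul_pow]
  norm_num

theorem stmt6_general (n T : ℕ) (ε : ℝ)
    (v vstar : Fin n) (hne : v ≠ vstar) :
    ∑ g : Fin T → Omg n,
        prodP T (Pv n ε vstar) g * (prodP T (Pv n ε v) g / prodP T (P0 n) g) = 1 := by
  simp only [prodP_mul_div, sum_prodP, sum_Pv_mul_div_P0 ε hne, one_pow]

/-- for distinct `v ≠ v*`, the expectation under `P_{v*}^T` of the
likelihood ratio `P_v^T / P_0^T` equals `1`. -/
theorem stmt6 (n T : ℕ) (ε : ℝ) (hε : 0 < ε) (hε' : ε ≤ 0.1) (hn : 2 ≤ n) (hT : 1 ≤ T)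
    (v vstar : Fin n) (hne : v ≠ vstar) :
    ∑ g : Fin T → Omg n,
        prodP T (Pv n ε vstar) g * (prodP T (Pv n ε v) g / prodP T (P0 n) g) = 1 :=
  stmt6_general n T ε v vstar hne
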